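/- For every 3CNF formula φ, every node (q, Z) reachable in the abstract zone graph ZG^{Extra_LU}(A^Z_φ) (with the bound functions derived from A^Z_φ, for which L(x) = 1 and U(x) = −∞ for every clock x) satisfies Z = ℝ≥0^X, the full non-negative half-space; consequently ZG^{Extra_LU}(A^Z_φ) is isomorphic to A^Z_φ: its reachable nodes are exactly the pairs (q, ℝ≥0^X) for states q of A^Z_φ, and (q, ℝ≥0^X) ⇒^t (q', ℝ≥0^X) is a transition of ZG^{Extra_LU}(A^Z_φ) if and only if t is a transition of A^Z_φ from q to q'. -/

import Mathlib

/-! ## Timed automata -/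

/-- Comparison operators appearing in clock constraints. -/
inductive Cmp : Type
  | lt | le | eq | ge | gt

/-- Semantics of a comparison on reals. -/
def Cmp.holds : Cmp → ℝ → ℝ → Prop
  | .lt, a, b => a < b
  | .le, a, b => a ≤ b
  | .eq, a, b => a = b
  | .ge, a, b => a ≥ b
  | .gt, a, b => a > b

/-- An atomic clock constraint `x # c` with `c ∈ ℕ`. -/
structure ClockConstraint (C : Type) where
  clock : C
  cmp : Cmp
  bound : ℕ

/-- A guard is a finite conjunction of atomic clock constraints. -/
abbrev Guard (C : Type) := List (ClockConstraint C)

/-- A clock valuation. -/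
abbrev Val (C : Type) := C → NNReal

/-- Satisfaction of a guard by a valuation. -/
def GSat {C : Type} (v : Val C) (g : Guard C) : Prop :=
  ∀ cc ∈ g, cc.cmp.holds (v cc.clock : ℝ) (cc.bound : ℝ)

/-- A transition `(q, g, R, q')` of a timed automaton. -/
structure Transition (Q C : Type) where
  src : Q
  guard : Guard C
  reset : Set C
  tgt : Q

/-- A timed automaton: initial state and a finite set of transitions. -/
structure TA (Q C : Type) where
  init : Q
  trans : Set (Transition Q C)
  finite_trans : trans.Finite

/-- An infinite run of a timed automaton: alternating delay and action transitions,
starting in the initial state with all clocks at `0`. -/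
structure TARun {Q C : Type} (A : TA Q C) where
  st : ℕ → Q
  val : ℕ → Val C
  del : ℕ → NNReal
  tr : ℕ → Transition Q C
  init_st : st 0 = A.init
  init_val : ∀ x, val 0 x = 0
  mem : ∀ i, tr i ∈ A.trans
  src_eq : ∀ i, (tr i).src = st i
  tgt_eq : ∀ i, (tr i).tgt = st (i + 1)
  guard_sat : ∀ i, GSat (fun x => val i x + del i) (tr i).guard
  reset_eq : ∀ i, ∀ x ∈ (tr i).reset, val (i + 1) x = 0
  unreset_eq : ∀ i, ∀ x ∉ (tr i).reset, val (i + 1) x = val i x + del i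

/-- A run is Zeno if the total elapsed time is bounded. -/
def TARun.Zeno {Q C : Type} {A : TA Q C} (ρ : TARun A) : Prop :=
  ∃ c : ℝ, ∀ n : ℕ, ∑ i ∈ Finset.range n, (ρ.del i : ℝ) ≤ c

def HasNonZenoRun {Q C : Type} (A : TA Q C) : Prop := ∃ ρ : TARun A, ¬ ρ.Zeno

def HasZenoRun {Q C : Type} (A : TA Q C) : Prop := ∃ ρ : TARun A, ρ.Zeno

/-! ## Zones and zone graphs -/

/-- Atomic zone constraints `x ~ c` and `x − y ~ c` with `c ∈ ℤ`. -/
inductive ZoneConstraint (C : Type) : Type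
  | single (x : C) (cmp : Cmp) (c : ℤ)
  | diff (x y : C) (cmp : Cmp) (c : ℤ)

def ZoneConstraint.sat {C : Type} (v : Val C) : ZoneConstraint C → Prop
  | .single x cmp c => cmp.holds (v x : ℝ) (c : ℝ)
  | .diff x y cmp c => cmp.holds ((v x : ℝ) - (v y : ℝ)) (c : ℝ)

/-- A zone is a set of valuations definable by finitely many zone constraints. -/
def IsZone {C : Type} (Z : Set (Val C)) : Prop :=
  ∃ l : List (ZoneConstraint C), Z = { v | ∀ cc ∈ l, cc.sat v }

/-- The initial zone `Z₀ = { v₀ + δ | δ ≥ 0 }`. -/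
def ZoneInit (C : Type) : Set (Val C) := { v | ∃ δ : NNReal, ∀ x, v x = δ }

/-- Successor zone along a transition: guard, then reset, then time elapse. -/
def post {Q C : Type} (t : Transition Q C) (Z : Set (Val C)) : Set (Val C) :=
  { v' | ∃ v ∈ Z, ∃ δ : NNReal, GSat v t.guard ∧
      (∀ x ∈ t.reset, v' x = δ) ∧ (∀ x ∉ t.reset, v' x = v x + δ) }

/-- An abstraction operator on sets of valuations. -/
abbrev Abstr (C : Type) := Set (Val C) → Set (Val C)

/-- A finite abstraction: maps zones to zones, is extensive and idempotent on zones,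
and has finite range on zones. -/
def IsFiniteAbstraction {C : Type} (𝔞 : Abstr C) : Prop :=
  (∀ Z : Set (Val C), IsZone Z → IsZone (𝔞 Z) ∧ Z ⊆ 𝔞 Z ∧ 𝔞 (𝔞 Z) = 𝔞 Z) ∧
  { W : Set (Val C) | ∃ Z, IsZone Z ∧ 𝔞 Z = W }.Finite

/-- Edge of the (unabstracted) zone graph `ZG(A)`. -/
def ZGEdge {Q C : Type} (A : TA Q C) (s s' : Q × Set (Val C)) : Prop :=
  ∃ t ∈ A.trans, t.src = s.1 ∧ t.tgt = s'.1 ∧ (post t s.2).Nonempty ∧ s'.2 = post t s.2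

/-- Reachability in the zone graph `ZG(A)` from the initial node. -/
def ZGReach {Q C : Type} (A : TA Q C) (s : Q × Set (Val C)) : Prop :=
  Relation.ReflTransGen (ZGEdge A) (A.init, ZoneInit C) s

/-- Edge of the abstract zone graph `ZG^𝔞(A)`. -/
def AZGEdge {Q C : Type} (A : TA Q C) (𝔞 : Abstr C)
    (s : Q × Set (Val C)) (t : Transition Q C) (s' : Q × Set (Val C)) : Prop :=
  𝔞 s.2 = s.2 ∧ t ∈ A.trans ∧ t.src = s.1 ∧ t.tgt = s'.1 ∧
    (post t s.2).Nonempty ∧ s'.2 = 𝔞 (post t s.2)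

/-- Reachability in the abstract zone graph `ZG^𝔞(A)` from the initial node. -/
def AZGReach {Q C : Type} (A : TA Q C) (𝔞 : Abstr C) (s : Q × Set (Val C)) : Prop :=
  Relation.ReflTransGen (fun a b => ∃ t, AZGEdge A 𝔞 a t b) (A.init, 𝔞 (ZoneInit C)) s

/-- An infinite path of the abstract zone graph starting at the initial node. -/
structure AZGPath {Q C : Type} (A : TA Q C) (𝔞 : Abstr C) where
  node : ℕ → Q × Set (Val C)
  tr : ℕ → Transition Q C
  init_node : node 0 = (A.init, 𝔞 (ZoneInit C))
  step : ∀ i, AZGEdge A 𝔞 (node i) (tr i) (node (i + 1))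

/-- A run instantiates a path: same transitions, matching states, valuations in zones. -/
def Instantiates {Q C : Type} {A : TA Q C} {𝔞 : Abstr C}
    (ρ : TARun A) (π : AZGPath A 𝔞) : Prop :=
  (∀ i, ρ.tr i = π.tr i) ∧ ∀ i, (π.node i).1 = ρ.st i ∧ ρ.val i ∈ (π.node i).2

/-- Soundness: every infinite path of `ZG^𝔞(A)` can be instantiated as a run of `A`. -/
def SoundAbs {Q C : Type} (A : TA Q C) (𝔞 : Abstr C) : Prop :=
  ∀ π : AZGPath A 𝔞, ∃ ρ : TARun A, Instantiates ρ π

/-- Completeness: every run of `A` is an instance of some path of `ZG^𝔞(A)`. -/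
def CompleteAbs {Q C : Type} (A : TA Q C) (𝔞 : Abstr C) : Prop :=
  ∀ ρ : TARun A, ∃ π : AZGPath A 𝔞, Instantiates ρ π

/-! ## Relevant clocks, reduced guessing zone graph -/

/-- Relevant clocks: those checked for `x ≤ 0` or `x = 0` in some guard. -/
def Rl {Q C : Type} (A : TA Q C) : Set C :=
  { x | ∃ t ∈ A.trans, ∃ cc ∈ t.guard,
      cc.clock = x ∧ cc.bound = 0 ∧ (cc.cmp = Cmp.le ∨ cc.cmp = Cmp.eq) }

/-- Clocks that can be `0` in some valuation of `Z`. -/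
def C0 {C : Type} (Z : Set (Val C)) : Set C := { x | ∃ v ∈ Z, v x = 0 }

/-- Edge of the reduced guessing zone graph; `none` labels the `τ`-transitions. -/
def RGZGEdge {Q C : Type} (A : TA Q C) (𝔞 : Abstr C)
    (s : Q × Set (Val C) × Set C) (l : Option (Transition Q C))
    (s' : Q × Set (Val C) × Set C) : Prop :=
  match l with
  | some t =>
      AZGEdge A 𝔞 (s.1, s.2.1) t (s'.1, s'.2.1) ∧
      (∃ v ∈ s.2.1, GSat v t.guard ∧ ∀ x ∈ Rl A \ s.2.2, 0 < v x) ∧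
      s'.2.2 = (s.2.2 ∪ t.reset) ∩ Rl A ∩ C0 s'.2.1
  | none => s'.1 = s.1 ∧ s'.2.1 = s.2.1 ∧ (s'.2.2 = ∅ ∨ s'.2.2 = s.2.2)

/-- Reachability in `RGZG^𝔞(A)` from the initial node `(q₀, 𝔞(Z₀), Rl(A))`. -/
def RGZGReach {Q C : Type} (A : TA Q C) (𝔞 : Abstr C)
    (s : Q × Set (Val C) × Set C) : Prop :=
  Relation.ReflTransGen (fun a b => ∃ l, RGZGEdge A 𝔞 a l b)
    (A.init, 𝔞 (ZoneInit C), Rl A) s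

/-- An infinite path of `RGZG^𝔞(A)` starting at the initial node. -/
structure RGZGPath {Q C : Type} (A : TA Q C) (𝔞 : Abstr C) where
  node : ℕ → Q × Set (Val C) × Set C
  lbl : ℕ → Option (Transition Q C)
  init_node : node 0 = (A.init, 𝔞 (ZoneInit C), Rl A)
  step : ∀ i, RGZGEdge A 𝔞 (node i) (lbl i) (node (i + 1))

/-- A clock is bounded in a guard if the guard implies `x ≤ c` for some constant `c`. -/
def ClockBounded {C : Type} (x : C) (g : Guard C) : Prop :=
  ∃ c : ℝ, ∀ v : Val C, GSat v g → (v x : ℝ) ≤ c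

/-- A blocked path: some clock is bounded infinitely often but reset only finitely often. -/
def RGZGPath.Blocked {Q C : Type} {A : TA Q C} {𝔞 : Abstr C} (π : RGZGPath A 𝔞) : Prop :=
  ∃ x : C,
    { i | ∃ t, π.lbl i = some t ∧ ClockBounded x t.guard }.Infinite ∧
    { i | ∃ t, π.lbl i = some t ∧ x ∈ t.reset }.Finite

def RGZGPath.Unblocked {Q C : Type} {A : TA Q C} {𝔞 : Abstr C} (π : RGZGPath A 𝔞) : Prop :=
  ¬ π.Blocked

/-- The path visits a clear node (empty guess set) infinitely often. -/
def RGZGPath.ClearInfOften {Q C : Type} {A : TA Q C} {𝔞 : Abstr C} (π : RGZGPath A 𝔞) : Prop :=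
  ∀ n : ℕ, ∃ m, n ≤ m ∧ (π.node m).2.2 = (∅ : Set C)

/-- `𝔞` weakly preserves orders (w.r.t. the automaton `A`). -/
def WeaklyPreservesOrders {Q C : Type} (A : TA Q C) (𝔞 : Abstr C) : Prop :=
  ∀ Z : Set (Val C), IsZone Z → ∀ x y : C,
    x ∈ Rl A ∩ C0 Z → y ∈ Rl A ∩ C0 Z →
    ((∀ v ∈ Z, v x ≤ v y) ↔ ∀ v ∈ 𝔞 Z, v x ≤ v y)

/-! ## Lifted clocks, slow zone graph -/

/-- Clocks `x` such that some guard of `A` implies `x ≥ 1`. -/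
def Lf {Q C : Type} (A : TA Q C) : Set C :=
  { x | ∃ t ∈ A.trans, ∀ v : Val C, GSat v t.guard → 1 ≤ (v x : ℝ) }

/-- Lift-safe abstraction. -/
def LiftSafe {Q C : Type} (A : TA Q C) (𝔞 : Abstr C) : Prop :=
  ∀ Z : Set (Val C), IsZone Z → ∀ x ∈ Lf A,
    ((∀ v ∈ Z, 1 ≤ (v x : ℝ)) ↔ ∀ v ∈ 𝔞 Z, 1 ≤ (v x : ℝ))

/-- Edge of the slow zone graph; the Boolean is `true` on slow nodes,
`none` labels the `τ`-transitions from free to slow. -/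
def SZGEdge {Q C : Type} (A : TA Q C) (𝔞 : Abstr C)
    (s : Q × Set (Val C) × Bool) (l : Option (Transition Q C))
    (s' : Q × Set (Val C) × Bool) : Prop :=
  match l with
  | some t =>
      AZGEdge A 𝔞 (s.1, s.2.1) t (s'.1, s'.2.1) ∧ s'.2.2 = s.2.2 ∧
      (s.2.2 = true → ∀ x ∈ t.reset, ∃ v ∈ s.2.1, GSat v t.guard ∧ (v x : ℝ) < 1)
  | none => s.2.2 = false ∧ s'.1 = s.1 ∧ s'.2.1 = s.2.1 ∧ s'.2.2 = true

/-- Reachability in `SZG^𝔞(A)` from the initial node `(q₀, 𝔞(Z₀), free)`. -/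
def SZGReach {Q C : Type} (A : TA Q C) (𝔞 : Abstr C)
    (s : Q × Set (Val C) × Bool) : Prop :=
  Relation.ReflTransGen (fun a b => ∃ l, SZGEdge A 𝔞 a l b)
    (A.init, 𝔞 (ZoneInit C), false) s

/-- An infinite path of `SZG^𝔞(A)` starting at the initial node. -/
structure SZGPath {Q C : Type} (A : TA Q C) (𝔞 : Abstr C) where
  node : ℕ → Q × Set (Val C) × Bool
  lbl : ℕ → Option (Transition Q C)
  init_node : node 0 = (A.init, 𝔞 (ZoneInit C), false)
  step : ∀ i, SZGEdge A 𝔞 (node i) (lbl i) (node (i + 1))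

/-- A slow path: some suffix consists entirely of slow nodes. -/
def SZGPath.Slow {Q C : Type} {A : TA Q C} {𝔞 : Abstr C} (π : SZGPath A 𝔞) : Prop :=
  ∃ N, ∀ i, N ≤ i → (π.node i).2.2 = true

/-! ## DBMs and LU-extrapolations -/

/-- A DBM entry: `∞` or a bound `(c, <)` / `(c, ≤)`. -/
inductive DBMEntry : Type
  | inf
  | bnd (c : ℤ) (strict : Bool)

/-- A real `d` satisfies a DBM entry. -/
def DBMEntry.sat (d : ℝ) : DBMEntry → Prop
  | .inf => True
  | .bnd c true => d < (c : ℝ)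
  | .bnd c false => d ≤ (c : ℝ)

/-- A DBM over clocks `C`; `none` is the special clock `x₀` with value `0`. -/
abbrev DBM (C : Type) := Option C → Option C → DBMEntry

/-- Extend a valuation with the special clock `x₀ = 0`. -/
def ext0 {C : Type} (v : Val C) : Option C → ℝ
  | none => 0
  | some x => (v x : ℝ)

/-- The zone described by a DBM. -/
def dbmZone {C : Type} (M : DBM C) : Set (Val C) :=
  { v | ∀ i j, (M i j).sat (ext0 v i - ext0 v j) }

/-- `M` is the canonical DBM of the nonempty zone `Z`: it defines `Z` and each of
its entries is the tightest constraint satisfied by all valuations of `Z`. -/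
def IsCanonicalDBM {C : Type} (Z : Set (Val C)) (M : DBM C) : Prop :=
  Z.Nonempty ∧ dbmZone M = Z ∧
  ∀ i j : Option C, ∀ e : DBMEntry,
    (∀ v ∈ Z, e.sat (ext0 v i - ext0 v j)) →
    ∀ d : ℝ, (M i j).sat d → e.sat d

/-- A bound in `ℕ ∪ {−∞}` (represented with integer values). -/
inductive ExtBound : Type
  | minf
  | fin (n : ℤ)

def ExtBound.max : ExtBound → ExtBound → ExtBound
  | .minf, b => b
  | .fin a, .minf => .fin a
  | .fin a, .fin b => .fin (a ⊔ b)

/-- Is `c_{ij} > b`? (`c_{ij}` the value of a DBM entry, possibly `∞`). -/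
def entryGtB : DBMEntry → ExtBound → Bool
  | .inf, _ => true
  | .bnd _ _, .minf => true
  | .bnd c _, .fin l => decide (l < c)

/-- Is `−c_{ij} > b`? (`−∞` when the entry is `∞`). -/
def negGtB : DBMEntry → ExtBound → Bool
  | .inf, _ => false
  | .bnd _ _, .minf => true
  | .bnd c _, .fin u => decide (u < -c)

/-- The entry `(−U(x), <)` (which is `(∞, <)` when `U(x) = −∞`). -/
def negUB : ExtBound → DBMEntry
  | .minf => .inf
  | .fin u => .bnd (-u) true

/-- Extend a bound function to the special clock `x₀`, with bound `0`. -/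
def extendB {C : Type} (f : C → ExtBound) : Option C → ExtBound
  | none => .fin 0
  | some x => f x

/-- The `Extra_LU` extrapolation of a (canonical) DBM. -/
def extraLU {C : Type} (L U : C → ExtBound) (M : DBM C) : DBM C := fun i j =>
  if entryGtB (M i j) (extendB L i) then DBMEntry.inf
  else if negGtB (M i j) (extendB U j) then negUB (extendB U j)
  else M i j

/-- The `Extra⁺_LU` extrapolation of a (canonical) DBM. -/
def extraLUp {C : Type} (L U : C → ExtBound) (M : DBM C) : DBM C := fun i j =>
  if entryGtB (M i j) (extendB L i) then DBMEntry.inf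
  else if negGtB (M none i) (extendB L i) then DBMEntry.inf
  else if negGtB (M none j) (extendB U j) && i.isSome then DBMEntry.inf
  else if negGtB (M none j) (extendB U j) then negUB (extendB U j)
  else M i j

/-- Constants `c` occurring in lower-bound guards `x > c` or `x ≥ c` of `A`. -/
def LowerConsts {Q C : Type} (A : TA Q C) (x : C) : Set ℕ :=
  { c | ∃ t ∈ A.trans, ∃ cc ∈ t.guard,
      cc.clock = x ∧ cc.bound = c ∧ (cc.cmp = Cmp.gt ∨ cc.cmp = Cmp.ge) }

/-- Constants `c` occurring in upper-bound guards `x < c` or `x ≤ c` of `A`. -/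
def UpperConsts {Q C : Type} (A : TA Q C) (x : C) : Set ℕ :=
  { c | ∃ t ∈ A.trans, ∃ cc ∈ t.guard,
      cc.clock = x ∧ cc.bound = c ∧ (cc.cmp = Cmp.lt ∨ cc.cmp = Cmp.le) }

/-- `b` is the maximum of `S` (and `−∞` when `S` is empty). -/
def IsBoundOf (S : Set ℕ) (b : ExtBound) : Prop :=
  (S = ∅ ∧ b = ExtBound.minf) ∨
  (∃ c ∈ S, b = ExtBound.fin (c : ℤ) ∧ ∀ c' ∈ S, c' ≤ c)

/-- `L` is the lower-bound function derived from `A`. -/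
def IsLFun {Q C : Type} (A : TA Q C) (L : C → ExtBound) : Prop :=
  ∀ x, IsBoundOf (LowerConsts A x) (L x)

/-- `U` is the upper-bound function derived from `A`. -/
def IsUFun {Q C : Type} (A : TA Q C) (U : C → ExtBound) : Prop :=
  ∀ x, IsBoundOf (UpperConsts A x) (U x)

/-! ## The automata `A^NZ_φ` and `A^Z_φ` built from a 3CNF formula -/

/-- A literal: a propositional variable together with its polarity.
Also used as clock type: `(i, true)` is `xᵢ` and `(i, false)` is `x̄ᵢ`. -/
abbrev Lit (k : ℕ) := Fin k × Bool

/-- States `q₀, …, q_k, r₀, …, r_n`. -/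
abbrev CNFState (k n : ℕ) := Fin (k + 1) ⊕ Fin (n + 1)

/-- A 3CNF formula with `n` clauses over `k` variables is satisfiable. -/
def Sat3 {k n : ℕ} (φ : Fin n → Fin 3 → Lit k) : Prop :=
  ∃ χ : Fin k → Bool, ∀ m : Fin n, ∃ j : Fin 3, χ (φ m j).1 = (φ m j).2

/-- The transitions of `A^NZ_φ`. -/
def anzTrans (k n : ℕ) (φ : Fin n → Fin 3 → Lit k) :
    (Fin k × Bool) ⊕ ((Fin n × Fin 3) ⊕ Bool) → Transition (CNFState k n) (Lit k)
  | Sum.inl (i, b) =>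
      ⟨Sum.inl i.castSucc, [], {(i, b)}, Sum.inl i.succ⟩
  | Sum.inr (Sum.inl (m, j)) =>
      ⟨Sum.inr m.castSucc, [⟨φ m j, Cmp.le, 0⟩], ∅, Sum.inr m.succ⟩
  | Sum.inr (Sum.inr true) =>
      ⟨Sum.inl (Fin.last k), [], ∅, Sum.inr 0⟩
  | Sum.inr (Sum.inr false) =>
      ⟨Sum.inr (Fin.last n), [], ∅, Sum.inl 0⟩

/-- The automaton `A^NZ_φ` (zero-checks `cl(ℓ) ≤ 0` on the clause transitions). -/
def ANZ (k n : ℕ) (φ : Fin n → Fin 3 → Lit k) : TA (CNFState k n) (Lit k) :=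
  ⟨Sum.inl 0, Set.range (anzTrans k n φ), Set.finite_range _⟩

/-- The transitions of `A^Z_φ`. -/
def azTrans (k n : ℕ) (φ : Fin n → Fin 3 → Lit k) :
    (Fin k × Bool) ⊕ ((Fin n × Fin 3) ⊕ Bool) → Transition (CNFState k n) (Lit k)
  | Sum.inl (i, b) =>
      ⟨Sum.inl i.castSucc, [], {(i, b)}, Sum.inl i.succ⟩
  | Sum.inr (Sum.inl (m, j)) =>
      ⟨Sum.inr m.castSucc, [⟨((φ m j).1, !(φ m j).2), Cmp.ge, 1⟩], ∅, Sum.inr m.succ⟩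
  | Sum.inr (Sum.inr true) =>
      ⟨Sum.inl (Fin.last k), [], ∅, Sum.inr 0⟩
  | Sum.inr (Sum.inr false) =>
      ⟨Sum.inr (Fin.last n), [], ∅, Sum.inl 0⟩

/-- The automaton `A^Z_φ` (guards `cl(¬ℓ) ≥ 1` on the clause transitions). -/
def AZfor (k n : ℕ) (φ : Fin n → Fin 3 → Lit k) : TA (CNFState k n) (Lit k) :=
  ⟨Sum.inl 0, Set.range (azTrans k n φ), Set.finite_range _⟩

/-! ## Auxiliary lemmas -/

set_option linter.unusedSectionVars false

section Aux

variable {C : Type} [DecidableEq C]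

lemma sat_mono {e : DBMEntry} {d d' : ℝ} (h : e.sat d) (hle : d' ≤ d) : e.sat d' := by
  cases e with
  | inf => trivial
  | bnd c s => cases s <;> simp only [DBMEntry.sat] at * <;> linarith

lemma tight_attained {Z : Set (Val C)} {i j : Option C} {c : ℤ}
    (h : ∃ v ∈ Z, ext0 v i - ext0 v j = (c : ℝ)) :
    ∀ e : DBMEntry, (∀ v ∈ Z, e.sat (ext0 v i - ext0 v j)) →
      ∀ d : ℝ, (DBMEntry.bnd c false).sat d → e.sat d := by
  rintro e he d hd
  obtain ⟨v, hv, hvc⟩ := h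
  have h2 := he v hv
  rw [hvc] at h2
  exact sat_mono h2 hd

lemma tight_unbounded {Z : Set (Val C)} {i j : Option C}
    (h : ∀ r : ℝ, ∃ v ∈ Z, r ≤ ext0 v i - ext0 v j) :
    ∀ e : DBMEntry, (∀ v ∈ Z, e.sat (ext0 v i - ext0 v j)) →
      ∀ d : ℝ, DBMEntry.inf.sat d → e.sat d := by
  rintro e he d -
  cases e with
  | inf => trivial
  | bnd c s =>
    obtain ⟨v, hv, hvc⟩ := h (c + 1)
    have h2 := he v hv
    exfalso
    cases s <;> simp only [DBMEntry.sat] at h2 <;> linarith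

end Aux
section Aux2

variable {C : Type} [DecidableEq C]

/-- Canonical DBM of the initial zone. -/
def DInit (C : Type) : DBM C := fun i j =>
  match i, j with
  | some _, none => DBMEntry.inf
  | _, _ => DBMEntry.bnd 0 false

/-- Canonical DBM of the full zone. -/
def DUniv (C : Type) [DecidableEq C] : DBM C := fun i j =>
  match i, j with
  | none, _ => DBMEntry.bnd 0 false
  | some _, none => DBMEntry.inf
  | some x, some y => if x = y then DBMEntry.bnd 0 false else DBMEntry.inf

/-- Canonical DBM of the zone obtained by resetting clock `c` from `univ`. -/
def DReset [DecidableEq C] (c : C) : DBM C := fun i j =>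
  match i, j with
  | none, _ => DBMEntry.bnd 0 false
  | some _, none => DBMEntry.inf
  | some x, some y => if x = c ∨ x = y then DBMEntry.bnd 0 false else DBMEntry.inf

/-- Canonical DBM of the zone `{v | 1 ≤ v c}`. -/
def DGuard [DecidableEq C] (c : C) : DBM C := fun i j =>
  match i, j with
  | none, none => DBMEntry.bnd 0 false
  | none, some y => if y = c then DBMEntry.bnd (-1) false else DBMEntry.bnd 0 false
  | some _, none => DBMEntry.inf
  | some x, some y => if x = y then DBMEntry.bnd 0 false else DBMEntry.inf

lemma extra_univ (L U : C → ExtBound) (hU : ∀ x, U x = ExtBound.minf)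
    (D : DBM C) (h1 : ∀ x, D (some x) none = DBMEntry.inf)
    (h2 : D none none = DBMEntry.bnd 0 false) :
    dbmZone (extraLU L U D) = Set.univ := by
  ext v
  simp only [dbmZone, Set.mem_setOf_eq, Set.mem_univ, iff_true]
  intro i j
  match i, j with
  | some x, none =>
    simp [extraLU, h1 x, entryGtB, DBMEntry.sat]
  | none, none =>
    simp [extraLU, h2, entryGtB, negGtB, extendB, DBMEntry.sat, ext0]
  | i, some y =>
    have hu : extendB U (some y) = ExtBound.minf := hU y
    by_cases hgt : entryGtB (D i (some y)) (extendB L i) = true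
    · simp [extraLU, hgt, DBMEntry.sat]
    · cases hD : D i (some y) with
      | inf => exact absurd (by simp [hD, entryGtB]) hgt
      | bnd c s => simp [extraLU, hgt, hD, hu, negGtB, negUB, DBMEntry.sat]

end Aux2
section Aux3

variable {C : Type} [DecidableEq C]

lemma canon_univ : IsCanonicalDBM (Set.univ : Set (Val C)) (DUniv C) := by
  refine ⟨⟨fun _ => 0, trivial⟩, ?_, ?_⟩
  · ext v
    simp only [dbmZone, Set.mem_setOf_eq, Set.mem_univ, iff_true]
    intro i j
    match i, j with
    | none, none => simp [DUniv, DBMEntry.sat, ext0]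
    | none, some y => simp [DUniv, DBMEntry.sat, ext0]
    | some x, none => simp [DUniv, DBMEntry.sat]
    | some x, some y =>
      by_cases h : x = y
      · subst h; simp [DUniv, DBMEntry.sat, ext0]
      · simp [DUniv, h, DBMEntry.sat]
  · intro i j e he d hd
    match i, j with
    | none, none =>
      exact tight_attained (Z := Set.univ) ⟨fun _ => 0, Set.mem_univ _, by simp [ext0]⟩ e he d hd
    | none, some y =>
      exact tight_attained (Z := Set.univ) ⟨fun _ => 0, Set.mem_univ _, by simp [ext0]⟩ e he d hd
    | some x, none =>
      refine tight_unbounded (Z := Set.univ) (fun r => ⟨fun _ => r.toNNReal, Set.mem_univ _, ?_⟩) e he d hd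
      simp [ext0, Real.coe_toNNReal']
    | some x, some y =>
      by_cases h : x = y
      · subst h
        have hd' : (DBMEntry.bnd 0 false).sat d := by simpa [DUniv] using hd
        exact tight_attained (Z := Set.univ) ⟨fun _ => 0, Set.mem_univ _, by simp [ext0]⟩ e he d hd'
      · refine tight_unbounded (Z := Set.univ)
          (fun r => ⟨fun z => if z = y then 0 else r.toNNReal, Set.mem_univ _, ?_⟩) e he d trivial
        simp [ext0, h, Real.coe_toNNReal']

end Aux3
section Aux4

variable {C : Type} [DecidableEq C]

lemma canon_init : IsCanonicalDBM (ZoneInit C) (DInit C) := by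
  have hmem0 : (fun _ => 0 : Val C) ∈ ZoneInit C := ⟨0, fun _ => rfl⟩
  have hmemc : ∀ δ : NNReal, (fun _ => δ : Val C) ∈ ZoneInit C := fun δ => ⟨δ, fun _ => rfl⟩
  refine ⟨⟨_, hmem0⟩, ?_, ?_⟩
  · ext v
    constructor
    · intro hv
      by_cases hC : Nonempty C
      · obtain ⟨x0⟩ := hC
        refine ⟨v x0, fun x => ?_⟩
        have h1 := hv (some x) (some x0)
        have h2 := hv (some x0) (some x)
        simp only [DInit, DBMEntry.sat, ext0, Int.cast_zero] at h1 h2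
        have : (v x : ℝ) = v x0 := by linarith
        exact NNReal.coe_injective this
      · exact ⟨0, fun x => (hC ⟨x⟩).elim⟩
    · rintro ⟨δ, hδ⟩ i j
      match i, j with
      | some x, none => simp [DInit, DBMEntry.sat]
      | none, none => simp [DInit, DBMEntry.sat, ext0]
      | none, some y => simp [DInit, DBMEntry.sat, ext0]
      | some x, some y => simp [DInit, DBMEntry.sat, ext0, hδ]
  · intro i j e he d hd
    match i, j with
    | none, none => exact tight_attained ⟨_, hmem0, by simp [ext0]⟩ e he d hd
    | none, some y => exact tight_attained ⟨_, hmem0, by simp [ext0]⟩ e he d hd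
    | some x, some y => exact tight_attained ⟨_, hmem0, by simp [ext0]⟩ e he d hd
    | some x, none =>
      refine tight_unbounded (fun r => ⟨_, hmemc r.toNNReal, ?_⟩) e he d hd
      simp [ext0, Real.coe_toNNReal']

lemma canon_reset (c : C) : IsCanonicalDBM {v : Val C | ∀ y, v c ≤ v y} (DReset c) := by
  have hmem0 : (fun _ => 0 : Val C) ∈ {v : Val C | ∀ y, v c ≤ v y} := fun y => le_refl 0
  refine ⟨⟨_, hmem0⟩, ?_, ?_⟩
  · ext v
    constructor
    · intro hv y
      have h1 := hv (some c) (some y)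
      rw [show DReset c (some c) (some y) = DBMEntry.bnd 0 false from if_pos (Or.inl rfl)] at h1
      simp only [DBMEntry.sat, ext0, Int.cast_zero] at h1
      rw [← NNReal.coe_le_coe]
      linarith
    · intro hv i j
      match i, j with
      | some x, none => simp [DReset, DBMEntry.sat]
      | none, none => simp [DReset, DBMEntry.sat, ext0]
      | none, some y => simp [DReset, DBMEntry.sat, ext0]
      | some x, some y =>
        by_cases h : x = c ∨ x = y
        · rw [show DReset c (some x) (some y) = DBMEntry.bnd 0 false from if_pos h]
          have hle : (v x : ℝ) ≤ v y := by
            rcases h with h | h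
            · subst h; exact_mod_cast hv y
            · subst h; exact le_refl _
          simp only [DBMEntry.sat, ext0, Int.cast_zero]
          linarith
        · rw [show DReset c (some x) (some y) = DBMEntry.inf from if_neg h]
          trivial
  · intro i j e he d hd
    match i, j with
    | none, none => exact tight_attained ⟨_, hmem0, by simp [ext0]⟩ e he d hd
    | none, some y => exact tight_attained ⟨_, hmem0, by simp [ext0]⟩ e he d hd
    | some x, none =>
      refine tight_unbounded (Z := {v : Val C | ∀ y, v c ≤ v y}) (fun r => ⟨fun _ => r.toNNReal, fun y => le_refl _, ?_⟩) e he d hd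
      simp [ext0, Real.coe_toNNReal']
    | some x, some y =>
      by_cases h : x = c ∨ x = y
      · have hd' : (DBMEntry.bnd 0 false).sat d := by
          rwa [show DReset c (some x) (some y) = DBMEntry.bnd 0 false from if_pos h] at hd
        exact tight_attained ⟨_, hmem0, by simp [ext0]⟩ e he d hd'
      · push_neg at h
        refine tight_unbounded (Z := {v : Val C | ∀ y, v c ≤ v y})
          (fun r => ⟨fun z => if z = x then r.toNNReal else 0, fun y' => ?_, ?_⟩) e he d trivial
        · have hc : c ≠ x := fun hh => h.1 hh.symm
          simp only [if_neg hc]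
          exact zero_le
        · have hne : y ≠ x := fun hh => h.2 hh.symm
          simp [ext0, hne, Real.coe_toNNReal']

end Aux4
section Aux5

variable {C : Type} [DecidableEq C]

lemma canon_guard (c : C) : IsCanonicalDBM {v : Val C | (1:ℝ) ≤ (v c : ℝ)} (DGuard c) := by
  set Z := {v : Val C | (1:ℝ) ≤ (v c : ℝ)} with hZ
  have hmemv : (fun z => if z = c then 1 else 0 : Val C) ∈ Z := by simp [hZ]
  have hmemr : ∀ r : ℝ, (fun _ => r.toNNReal + 1 : Val C) ∈ Z := by
    intro r
    simp only [hZ, Set.mem_setOf_eq, NNReal.coe_add, NNReal.coe_one, Real.coe_toNNReal']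
    have := le_max_right r 0
    linarith
  refine ⟨⟨_, hmemv⟩, ?_, ?_⟩
  · ext v
    constructor
    · intro hv
      have h1 := hv none (some c)
      rw [show DGuard c none (some c) = DBMEntry.bnd (-1) false from if_pos rfl] at h1
      simp only [DBMEntry.sat, ext0] at h1
      simp only [hZ, Set.mem_setOf_eq]
      push_cast at h1
      linarith
    · intro hv i j
      have hvc : (1:ℝ) ≤ (v c : ℝ) := hv
      match i, j with
      | some x, none => trivial
      | none, none => simp [DGuard, DBMEntry.sat, ext0]
      | none, some y =>
        by_cases h : y = c
        · rw [show DGuard c none (some y) = DBMEntry.bnd (-1) false from if_pos h]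
          simp only [DBMEntry.sat, ext0]
          push_cast
          rw [h]
          linarith
        · rw [show DGuard c none (some y) = DBMEntry.bnd 0 false from if_neg h]
          simp [DBMEntry.sat, ext0]
      | some x, some y =>
        by_cases h : x = y
        · subst h
          rw [show DGuard c (some x) (some x) = DBMEntry.bnd 0 false from if_pos rfl]
          simp [DBMEntry.sat, ext0]
        · rw [show DGuard c (some x) (some y) = DBMEntry.inf from if_neg h]
          trivial
  · intro i j e he d hd
    match i, j with
    | none, none => exact tight_attained ⟨_, hmemv, by simp [ext0]⟩ e he d hd
    | none, some y =>
      by_cases h : y = c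
      · have hd' : (DBMEntry.bnd (-1) false).sat d := by
          rwa [show DGuard c none (some y) = DBMEntry.bnd (-1) false from if_pos h] at hd
        refine tight_attained ⟨_, hmemv, ?_⟩ e he d hd'
        simp [ext0, h]
      · have hd' : (DBMEntry.bnd 0 false).sat d := by
          rwa [show DGuard c none (some y) = DBMEntry.bnd 0 false from if_neg h] at hd
        refine tight_attained ⟨_, hmemv, ?_⟩ e he d hd'
        simp [ext0, h]
    | some x, none =>
      refine tight_unbounded (Z := Z) (fun r => ⟨_, hmemr r, ?_⟩) e he d hd
      simp only [ext0, NNReal.coe_add, NNReal.coe_one, Real.coe_toNNReal']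
      have := le_max_left r 0
      linarith
    | some x, some y =>
      by_cases h : x = y
      · subst h
        have hd' : (DBMEntry.bnd 0 false).sat d := by
          rwa [show DGuard c (some x) (some x) = DBMEntry.bnd 0 false from if_pos rfl] at hd
        exact tight_attained ⟨_, hmemv, by simp [ext0]⟩ e he d hd'
      · have hne : x ≠ y := h
        refine tight_unbounded (Z := Z) (fun r =>
          ⟨fun z => if z = x then r.toNNReal + 1 else if z = c then 1 else 0, ?_, ?_⟩)
          e he d trivial
        · show (1:ℝ) ≤ ((if c = x then r.toNNReal + 1 else if c = c then 1 else 0 : NNReal) : ℝ)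
          by_cases hcx : c = x
          · rw [if_pos hcx]
            simp only [NNReal.coe_add, NNReal.coe_one, Real.coe_toNNReal']
            have := le_max_right r 0
            linarith
          · rw [if_neg hcx, if_pos rfl]
            norm_num
        · show r ≤ ((if x = x then r.toNNReal + 1 else if x = c then 1 else 0 : NNReal) : ℝ)
              - ((if y = x then r.toNNReal + 1 else if y = c then 1 else 0 : NNReal) : ℝ)
          rw [if_pos rfl, if_neg (fun hh => hne hh.symm)]
          have hmx := le_max_left r 0
          by_cases hyc : y = c
          · rw [if_pos hyc]
            simp only [NNReal.coe_add, NNReal.coe_one, Real.coe_toNNReal']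
            linarith
          · rw [if_neg hyc]
            simp only [NNReal.coe_add, NNReal.coe_one, NNReal.coe_zero, Real.coe_toNNReal']
            linarith

end Aux5
section Aux6

lemma post_unguarded {Q C : Type} (t : Transition Q C) (hg : t.guard = [])
    (hr : t.reset = ∅) : post t (Set.univ : Set (Val C)) = Set.univ := by
  ext v'
  simp only [post, Set.mem_setOf_eq, Set.mem_univ, iff_true]
  refine ⟨v', trivial, 0, ?_, ?_, ?_⟩
  · intro cc hcc; rw [hg] at hcc; cases hcc
  · intro x hx; rw [hr] at hx; cases hx
  · intro x _; exact (add_zero _).symm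

lemma post_reset {Q C : Type} (t : Transition Q C) (c : C) (hg : t.guard = [])
    (hr : t.reset = {c}) :
    post t (Set.univ : Set (Val C)) = {v : Val C | ∀ y, v c ≤ v y} := by
  ext v'
  simp only [post, Set.mem_setOf_eq]
  constructor
  · rintro ⟨v, -, δ, -, hres, hun⟩ y
    have hc : v' c = δ := hres c (by rw [hr]; rfl)
    by_cases hy : y = c
    · subst hy; exact le_refl _
    · have : v' y = v y + δ := hun y (by rw [hr]; simpa using hy)
      rw [hc, this]
      exact le_add_self
  · intro hv'
    refine ⟨fun y => v' y - v' c, Set.mem_univ _, v' c, ?_, ?_, ?_⟩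
    · intro cc hcc; rw [hg] at hcc; cases hcc
    · intro x hx
      rw [hr] at hx
      rw [Set.mem_singleton_iff] at hx
      rw [hx]
    · intro x _
      exact (tsub_add_cancel_of_le (hv' x)).symm

lemma post_guard {Q C : Type} (t : Transition Q C) (c : C)
    (hg : t.guard = [⟨c, Cmp.ge, 1⟩]) (hr : t.reset = ∅) :
    post t (Set.univ : Set (Val C)) = {v : Val C | (1:ℝ) ≤ (v c : ℝ)} := by
  ext v'
  simp only [post, Set.mem_setOf_eq]
  constructor
  · rintro ⟨v, -, δ, hgs, -, hun⟩
    have h1 : Cmp.ge.holds (v c : ℝ) ((1:ℕ) : ℝ) := hgs ⟨c, Cmp.ge, 1⟩ (by rw [hg]; exact List.mem_singleton.mpr rfl)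
    have h2 : (v c : ℝ) ≥ 1 := by simpa [Cmp.holds] using h1
    have h3 : v' c = v c + δ := hun c (by rw [hr]; exact Set.notMem_empty c)
    rw [h3]
    push_cast
    have : (0:ℝ) ≤ δ := δ.coe_nonneg
    linarith
  · intro hv'
    refine ⟨v', Set.mem_univ _, 0, ?_, ?_, ?_⟩
    · intro cc hcc
      rw [hg] at hcc
      rw [List.mem_singleton] at hcc
      subst hcc
      simpa [Cmp.holds] using hv'
    · intro x hx; rw [hr] at hx; cases hx
    · intro x _; exact (add_zero _).symm

lemma upperConsts_empty (k n : ℕ) (φ : Fin n → Fin 3 → Lit k) (x : Lit k) :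
    UpperConsts (AZfor k n φ) x = ∅ := by
  ext c
  simp only [UpperConsts, Set.mem_setOf_eq, Set.mem_empty_iff_false, iff_false]
  rintro ⟨t, ⟨idx, rfl⟩, cc, hcc, -, -, hcmp⟩
  rcases idx with ⟨i, b⟩ | ⟨⟨m, j⟩ | b⟩
  · simp [azTrans] at hcc
  · simp only [azTrans, List.mem_singleton] at hcc
    subst hcc
    rcases hcmp with h | h <;> simp at h
  · cases b <;> simp [azTrans] at hcc

lemma ufun_minf {k n : ℕ} {φ : Fin n → Fin 3 → Lit k} {U : Lit k → ExtBound}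
    (hU : IsUFun (AZfor k n φ) U) : ∀ x, U x = ExtBound.minf := by
  intro x
  rcases hU x with ⟨-, h⟩ | ⟨c, hc, -⟩
  · exact h
  · rw [upperConsts_empty] at hc
    cases hc

end Aux6
/-- With the LU-bounds derived from `A^Z_φ`, every node reachable in
`ZG^{Extra_LU}(A^Z_φ)` carries the full zone `ℝ≥0^X`; consequently the abstract zone
graph is isomorphic to the automaton: the reachable nodes are exactly the pairs
`(q, ℝ≥0^X)` and the edges correspond exactly to the transitions of `A^Z_φ`. -/
theorem azg_extraLU_AZ_isomorphic (k n : ℕ) (φ : Fin n → Fin 3 → Lit k)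
    (L U : Lit k → ExtBound)
    (hL : IsLFun (AZfor k n φ) L) (hU : IsUFun (AZfor k n φ) U)
    (𝔞 : Abstr (Lit k))
    (h𝔞 : ∀ (Z : Set (Val (Lit k))) (D : DBM (Lit k)),
      IsCanonicalDBM Z D → 𝔞 Z = dbmZone (extraLU L U D)) :
    (∀ (q : CNFState k n) (Z : Set (Val (Lit k))),
        AZGReach (AZfor k n φ) 𝔞 (q, Z) → Z = Set.univ) ∧
    (∀ q : CNFState k n, AZGReach (AZfor k n φ) 𝔞 (q, Set.univ)) ∧
    (∀ (t : Transition (CNFState k n) (Lit k)) (q q' : CNFState k n),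
        AZGEdge (AZfor k n φ) 𝔞 (q, Set.univ) t (q', Set.univ) ↔
          t ∈ (AZfor k n φ).trans ∧ t.src = q ∧ t.tgt = q') := by

  have hUm := ufun_minf hU
  have habs : ∀ (Z : Set (Val (Lit k))) (D : DBM (Lit k)), IsCanonicalDBM Z D →
      (∀ x, D (some x) none = DBMEntry.inf) → D none none = DBMEntry.bnd 0 false →
      𝔞 Z = Set.univ := by
    intro Z D hD h1 h2
    rw [h𝔞 Z D hD]
    exact extra_univ L U hUm D h1 h2
  have hinit : 𝔞 (ZoneInit (Lit k)) = Set.univ :=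
    habs _ _ canon_init (fun x => rfl) rfl
  have huniv : 𝔞 (Set.univ) = Set.univ :=
    habs _ _ canon_univ (fun x => rfl) rfl
  have hpost : ∀ t ∈ (AZfor k n φ).trans,
      𝔞 (post t Set.univ) = Set.univ ∧
        (post t (Set.univ : Set (Val (Lit k)))).Nonempty := by
    rintro t ⟨idx, rfl⟩
    rcases idx with ⟨i, b⟩ | ⟨⟨m, j⟩ | b⟩
    · rw [post_reset _ (i, b) rfl rfl]
      exact ⟨habs _ _ (canon_reset (i, b)) (fun x => rfl) rfl,
        ⟨fun _ => 0, fun y => le_refl _⟩⟩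
    · rw [post_guard _ ((φ m j).1, !(φ m j).2) rfl rfl]
      exact ⟨habs _ _ (canon_guard _) (fun x => rfl) rfl,
        ⟨fun z => if z = ((φ m j).1, !(φ m j).2) then 1 else 0, by simp⟩⟩
    · cases b
      · rw [post_unguarded _ rfl rfl]
        exact ⟨huniv, ⟨fun _ => 0, trivial⟩⟩
      · rw [post_unguarded _ rfl rfl]
        exact ⟨huniv, ⟨fun _ => 0, trivial⟩⟩
  refine ⟨?_, ?_, ?_⟩
  · intro q Z h
    have key : ∀ s : CNFState k n × Set (Val (Lit k)),
        AZGReach (AZfor k n φ) 𝔞 s → s.2 = Set.univ := by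
      intro s hs
      induction hs with
      | refl => exact hinit
      | tail h1 h2 ih =>
        obtain ⟨t, -, ht, -, -, -, hz⟩ := h2
        rw [hz, ih]
        exact (hpost t ht).1
    exact key (q, Z) h
  · have hstep : ∀ (q' : CNFState k n) (t : Transition (CNFState k n) (Lit k)),
        t ∈ (AZfor k n φ).trans → t.tgt = q' →
        AZGReach (AZfor k n φ) 𝔞 (t.src, Set.univ) →
        AZGReach (AZfor k n φ) 𝔞 (q', Set.univ) := by
      intro q' t ht htgt hr
      exact hr.tail ⟨t, huniv, ht, rfl, htgt, (hpost t ht).2, ((hpost t ht).1).symm⟩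
    have hbase : AZGReach (AZfor k n φ) 𝔞 ((Sum.inl 0 : CNFState k n), Set.univ) := by
      have heq : ((AZfor k n φ).init, 𝔞 (ZoneInit (Lit k)))
          = ((Sum.inl 0 : CNFState k n), (Set.univ : Set (Val (Lit k)))) := by
        rw [hinit]
        rfl
      unfold AZGReach
      rw [heq]
    have hinl : ∀ i : Fin (k+1),
        AZGReach (AZfor k n φ) 𝔞 ((Sum.inl i : CNFState k n), Set.univ) := by
      intro i
      induction i using Fin.induction with
      | zero => exact hbase
      | succ i ih =>
        exact hstep _ (azTrans k n φ (Sum.inl (i, true))) ⟨_, rfl⟩ rfl ih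
    have hr0 : AZGReach (AZfor k n φ) 𝔞 ((Sum.inr 0 : CNFState k n), Set.univ) :=
      hstep _ (azTrans k n φ (Sum.inr (Sum.inr true))) ⟨_, rfl⟩ rfl (hinl (Fin.last k))
    have hinr : ∀ m : Fin (n+1),
        AZGReach (AZfor k n φ) 𝔞 ((Sum.inr m : CNFState k n), Set.univ) := by
      intro m
      induction m using Fin.induction with
      | zero => exact hr0
      | succ m ih =>
        exact hstep _ (azTrans k n φ (Sum.inr (Sum.inl (m, 0)))) ⟨_, rfl⟩ rfl ih
    intro q
    rcases q with i | m
    · exact hinl i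
    · exact hinr m
  · intro t q q'
    constructor
    · rintro ⟨-, ht, hs, htg, -, -⟩
      exact ⟨ht, hs, htg⟩
    · rintro ⟨ht, hs, htg⟩
      exact ⟨huniv, ht, hs, htg, (hpost t ht).2, ((hpost t ht).1).symm⟩
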